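/- Let n, m be positive integers. Let W ∈ ℝ^{n×n} be a symmetric matrix with W·1_n = 1_n, such that 1 is a simple eigenvalue of W and every other eigenvalue of W lies in the open interval (−1, 1). Let G_1, ..., G_n be real symmetric m×m matrices such that G := Σ_{i=1}^n G_i ⪰ ν I_m for some ν > 0, and let H_1, ..., H_n ∈ ℝ^m. For a stepsize β > 0, consider the gradient-tracking iteration: x_i(0) = 0, s_i(0) = H_i, and for t ≥ 0, x_i(t+1) = Σ_{j=1}^n W_{ij} x_j(t) − β s_i(t), and s_i(t+1) = Σ_{j=1}^n W_{ij} s_j(t) + G_i ( x_i(t+1) − x_i(t) ). Then there exists β* > 0 such that for every β ∈ (0, β*) there exist C > 0 and α ∈ (0,1) with ‖x_i(t) − x(∞)‖ ≤ C α^t for all i ∈ {1,...,n} and all t ≥ 0, where x(∞) := −G^{-1} H with H := Σ_{i=1}^n H_i. -/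

import Mathlib

/-!
Split every stack of agent variables into its network average and its disagreement with the
average. Because `W` is doubly stochastic, the averages follow the gradient step
`x̄ ← x̄ - β s̄`, and the tracking invariant `∑ sᵢ = ∑ (Gᵢ xᵢ + Hᵢ)` makes `s̄` the averaged
gradient at `x̄` up to an error controlled by the disagreement of `x`; the spectral gap of `W`
contracts disagreements by a factor `σ < 1`. The consensus errors of `x` and `s` and the distance
of `x̄` to the minimiser therefore satisfy a linear system of recursive inequalities in which
every coupling term is `O(β)` except the one feeding the disagreement of `x` into that of `s`.
For small `β` a suitably weighted sum of the three errors contracts by `1 - βν / (4n)` per step.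
-/

open Matrix Finset

open scoped RealInnerProductSpace

section StackNorm

variable {ι E : Type*} [Fintype ι] [NormedAddCommGroup E]

noncomputable def stackNorm (U : ι → E) : ℝ := ‖(WithLp.toLp 2 U : PiLp 2 fun _ : ι => E)‖

lemma stackNorm_nonneg (U : ι → E) : 0 ≤ stackNorm U := norm_nonneg _

lemma stackNorm_sq (U : ι → E) : stackNorm U ^ 2 = ∑ i, ‖U i‖ ^ 2 :=
  PiLp.norm_sq_eq_of_L2 _ _

lemma norm_le_stackNorm (U : ι → E) (i : ι) : ‖U i‖ ≤ stackNorm U :=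
  PiLp.norm_apply_le (WithLp.toLp 2 U) i

lemma stackNorm_add_le (U V : ι → E) : stackNorm (U + V) ≤ stackNorm U + stackNorm V :=
  norm_add_le _ _

lemma stackNorm_sub_le (U V : ι → E) : stackNorm (U - V) ≤ stackNorm U + stackNorm V :=
  norm_sub_le _ _

lemma stackNorm_smul [NormedSpace ℝ E] (c : ℝ) (U : ι → E) :
    stackNorm (c • U) = |c| * stackNorm U := by
  rw [stackNorm, WithLp.toLp_smul, norm_smul, Real.norm_eq_abs, stackNorm]

lemma stackNorm_const (v : E) : stackNorm (fun _ : ι => v) = √(Fintype.card ι) * ‖v‖ := by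
  rw [← Real.sqrt_sq (stackNorm_nonneg _), stackNorm_sq, Finset.sum_const, Finset.card_univ,
    nsmul_eq_mul, Real.sqrt_mul (Nat.cast_nonneg _), Real.sqrt_sq (norm_nonneg _)]

lemma stackNorm_le_of_norm_le {U V : ι → E} {L : ℝ} (hL : 0 ≤ L)
    (h : ∀ i, ‖V i‖ ≤ L * ‖U i‖) : stackNorm V ≤ L * stackNorm U := by
  refine le_of_sq_le_sq ?_ (mul_nonneg hL (stackNorm_nonneg U))
  rw [mul_pow, stackNorm_sq, stackNorm_sq, Finset.mul_sum]
  gcongr with i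
  simpa [mul_pow] using pow_le_pow_left₀ (norm_nonneg _) (h i) 2

end StackNorm

section Mixing

variable {ι E : Type*} [Fintype ι] [AddCommGroup E] [Module ℝ E]

@[simps]
def mix (W : Matrix ι ι ℝ) : (ι → E) →ₗ[ℝ] ι → E where
  toFun U i := ∑ j, W i j • U j
  map_add' U V := by ext i; simp [smul_add, Finset.sum_add_distrib]
  map_smul' c U := by ext i; simp [smul_comm c, Finset.smul_sum]

@[simps]
noncomputable def average : (ι → E) →ₗ[ℝ] E where
  toFun U := (Fintype.card ι : ℝ)⁻¹ • ∑ i, U i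
  map_add' U V := by simp [Finset.sum_add_distrib]
  map_smul' c U := by simp [Finset.smul_sum, smul_comm c]

noncomputable def disagreement : (ι → E) →ₗ[ℝ] ι → E where
  toFun U := U - fun _ => average U
  map_add' U V := by ext i; simp [Finset.sum_add_distrib]; abel
  map_smul' c U := by ext i; simp [smul_sub]

lemma disagreement_eq (U : ι → E) : disagreement U = U - fun _ => average U := rfl

lemma disagreement_add_const (U : ι → E) : disagreement U + (fun _ => average U) = U :=
  sub_add_cancel _ _

lemma sum_disagreement [Nonempty ι] (U : ι → E) : ∑ i, disagreement U i = 0 := by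
  simp only [disagreement_eq, Pi.sub_apply]
  rw [Finset.sum_sub_distrib, Finset.sum_const, Finset.card_univ,
    ← Nat.cast_smul_eq_nsmul ℝ, average_apply, smul_smul,
    mul_inv_cancel₀ (Nat.cast_ne_zero.2 Fintype.card_ne_zero), one_smul, sub_self]

variable {W : Matrix ι ι ℝ}

lemma mix_const (hrow : ∀ i, ∑ j, W i j = 1) (v : E) : mix W (fun _ => v) = fun _ => v := by
  ext i; simp [← Finset.sum_smul, hrow]

lemma sum_mix (hcol : ∀ j, ∑ i, W i j = 1) (U : ι → E) : ∑ i, mix W U i = ∑ i, U i := by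
  simp only [mix_apply]
  rw [Finset.sum_comm]
  simp [← Finset.sum_smul, hcol]

lemma average_mix (hcol : ∀ j, ∑ i, W i j = 1) (U : ι → E) : average (mix W U) = average U := by
  simp only [average_apply, sum_mix hcol]

lemma disagreement_mix (hrow : ∀ i, ∑ j, W i j = 1) (hcol : ∀ j, ∑ i, W i j = 1) (U : ι → E) :
    disagreement (mix W U) = mix W (disagreement U) := by
  rw [disagreement_eq, disagreement_eq, map_sub, mix_const hrow, average_mix hcol]

lemma mix_sub_self (hrow : ∀ i, ∑ j, W i j = 1) (U : ι → E) :
    mix W U - U = mix W (disagreement U) - disagreement U := by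
  rw [disagreement_eq, map_sub, mix_const hrow]; abel

end Mixing

section InnerProduct

variable {ι E : Type*} [Fintype ι] [NormedAddCommGroup E] [InnerProductSpace ℝ E]

lemma stackNorm_sq_eq_disagreement_add_average [Nonempty ι] (U : ι → E) :
    stackNorm U ^ 2 = stackNorm (disagreement U) ^ 2 + stackNorm (fun _ : ι => average U) ^ 2 := by
  have hU : ∀ i, ‖U i‖ ^ 2 = ‖disagreement U i‖ ^ 2 + 2 * ⟪disagreement U i, average U⟫
      + ‖average U‖ ^ 2 := fun i => by
    rw [← norm_add_sq_real, disagreement_eq, Pi.sub_apply, sub_add_cancel]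
  have hperp : ∑ i, ⟪disagreement U i, average U⟫ = 0 := by
    rw [← sum_inner, sum_disagreement, inner_zero_left]
  simp only [stackNorm_sq, hU, Finset.sum_add_distrib, ← Finset.mul_sum, hperp]
  ring

lemma stackNorm_disagreement_le [Nonempty ι] (U : ι → E) :
    stackNorm (disagreement U) ≤ stackNorm U :=
  le_of_sq_le_sq ((stackNorm_sq_eq_disagreement_add_average U).symm ▸
    le_add_of_nonneg_right (sq_nonneg _)) (stackNorm_nonneg U)

lemma stackNorm_const_average_le [Nonempty ι] (U : ι → E) :
    stackNorm (fun _ : ι => average U) ≤ stackNorm U :=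
  le_of_sq_le_sq ((stackNorm_sq_eq_disagreement_add_average U).symm ▸
    le_add_of_nonneg_left (sq_nonneg _)) (stackNorm_nonneg U)

lemma norm_average_le [Nonempty ι] {U : ι → E} {M : ℝ} (h : ∀ i, ‖U i‖ ≤ M) :
    ‖average U‖ ≤ M := by
  have hN : (0 : ℝ) < Fintype.card ι := Nat.cast_pos.2 Fintype.card_pos
  rw [average_apply, norm_smul, norm_inv, Real.norm_natCast, inv_mul_le_iff₀ hN]
  calc ‖∑ i, U i‖ ≤ ∑ i, ‖U i‖ := norm_sum_le _ _
    _ ≤ ∑ _i : ι, M := Finset.sum_le_sum fun i _ => h i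
    _ = Fintype.card ι * M := by simp

lemma norm_sub_smul_le_of_le_inner {v w : E} {ν L η : ℝ} (hη : 0 ≤ η) (hvw : ν * ‖v‖ ^ 2 ≤ ⟪v, w⟫)
    (hw : ‖w‖ ≤ L * ‖v‖) (hηL : η * L ^ 2 ≤ ν) (hην : η * ν ≤ 2) :
    ‖v - η • w‖ ≤ (1 - η * ν / 2) * ‖v‖ := by
  refine le_of_sq_le_sq ?_ (mul_nonneg (by linarith) (norm_nonneg v))
  have hw2 : ‖w‖ ^ 2 ≤ L ^ 2 * ‖v‖ ^ 2 := by
    rw [← mul_pow]; exact pow_le_pow_left₀ (norm_nonneg w) hw 2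
  have hcross : η * (ν * ‖v‖ ^ 2) ≤ η * ⟪v, w⟫ := mul_le_mul_of_nonneg_left hvw hη
  have hquad : η ^ 2 * ‖w‖ ^ 2 ≤ η * ν * ‖v‖ ^ 2 := by
    calc η ^ 2 * ‖w‖ ^ 2 ≤ η ^ 2 * (L ^ 2 * ‖v‖ ^ 2) := by gcongr
      _ = η * (η * L ^ 2) * ‖v‖ ^ 2 := by ring
      _ ≤ η * ν * ‖v‖ ^ 2 := by gcongr
  rw [norm_sub_sq_real, norm_smul, inner_smul_right, mul_pow, Real.norm_eq_abs, sq_abs]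
  nlinarith [sq_nonneg (η * ν * ‖v‖)]

end InnerProduct

lemma exists_le_mul_pow_of_le_mul {u V : ℕ → ℝ} {α M : ℝ} (hα : 0 ≤ α) (hM : 0 ≤ M)
    (hV : ∀ t, V (t + 1) ≤ α * V t) (hu : ∀ t, u t ≤ M * V t) :
    ∃ C > 0, ∀ t, u t ≤ C * α ^ t := by
  refine ⟨M * |V 0| + 1, by positivity, fun t => ?_⟩
  have hdecay : V t ≤ α ^ t * V 0 := le_geom hα t fun k _ => hV k
  calc u t ≤ M * (α ^ t * |V 0|) :=
        (hu t).trans (mul_le_mul_of_nonneg_left (hdecay.trans (by gcongr; exact le_abs_self _)) hM)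
    _ ≤ (M * |V 0| + 1) * α ^ t := by nlinarith [pow_nonneg hα t]

lemma exists_stepsize_geometric_decay {σ K κ : ℝ} (hσ0 : 0 ≤ σ) (hσ : σ < 1) (hK : 0 < K)
    (hκ : 0 < κ) :
    ∃ βstar > 0, ∀ β, 0 < β → β < βstar → ∀ a b c : ℕ → ℝ,
      (∀ t, 0 ≤ a t) → (∀ t, 0 ≤ b t) → (∀ t, 0 ≤ c t) →
      (∀ t, a (t + 1) ≤ σ * a t + β * b t) →
      (∀ t, b (t + 1) ≤ σ * b t + K * a t + β * K * (a t + b t + c t)) →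
      (∀ t, c (t + 1) ≤ (1 - β * κ) * c t + β * K * a t) →
      ∃ C > 0, ∃ α ∈ Set.Ioo (0 : ℝ) 1, ∀ t, a t + c t ≤ C * α ^ t := by
  -- Weights of the Lyapunov function `p * a + b + q * c`: `q` makes the `c`-coefficient exactly
  -- `α * q`, and `p` absorbs the `K`-terms of the `a`-coefficient within the margin `(1 - σ) / 2`.
  obtain ⟨q, hq0, hqκ⟩ : ∃ q > 0, q * κ = 2 * K := ⟨2 * K / κ, by positivity, by field_simp⟩
  obtain ⟨p, hp0, hpσ⟩ : ∃ p > 0, p * (1 - σ) = 2 * K * (2 + q) :=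
    ⟨2 * K * (2 + q) / (1 - σ), div_pos (by positivity) (by linarith),
      by field_simp [(by linarith : 1 - σ ≠ 0)]⟩
  refine ⟨min 1 (min ((1 - σ) / κ) ((1 - σ) / (2 * (p + K)))), by positivity, ?_⟩
  intro β hβ0 hβ a b c ha hb hc hastep hbstep hcstep
  simp only [lt_min_iff, lt_div_iff₀ hκ, lt_div_iff₀ (by positivity : 0 < 2 * (p + K))] at hβ
  obtain ⟨hβ1, hβκ, hβp⟩ := hβ
  set α := 1 - β * κ / 2 with hαdef
  set V : ℕ → ℝ := fun t => p * a t + b t + q * c t with hV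
  have hα : (1 + σ) / 2 ≤ α := by linarith
  have hcoef_a : p * σ + K + β * K + q * β * K ≤ α * p := by
    have : β * (K * (1 + q)) ≤ 1 * (K * (1 + q)) := by gcongr
    nlinarith
  have hcoef_b : p * β + σ + β * K ≤ α := by linarith
  have hcoef_c : β * K + q * (1 - β * κ) = α * q := by linear_combination (-β / 2) * hqκ
  have hstep : ∀ t, V (t + 1) ≤ α * V t := by
    intro t
    have hnext : V (t + 1) ≤ (p * σ + K + β * K + q * β * K) * a t + (p * β + σ + β * K) * b t
        + (β * K + q * (1 - β * κ)) * c t := by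
      simp only [hV]
      nlinarith [mul_le_mul_of_nonneg_left (hastep t) hp0.le,
        mul_le_mul_of_nonneg_left (hcstep t) hq0.le, hbstep t]
    rw [hcoef_c] at hnext
    simp only [hV] at hnext ⊢
    linarith [mul_le_mul_of_nonneg_right hcoef_a (ha t), mul_le_mul_of_nonneg_right hcoef_b (hb t)]
  have hac : ∀ t, a t + c t ≤ (p⁻¹ + q⁻¹) * V t := fun t => by
    have hpa : a t ≤ p⁻¹ * V t := by
      rw [le_inv_mul_iff₀ hp0]; linarith [hb t, mul_nonneg hq0.le (hc t)]
    have hqc : c t ≤ q⁻¹ * V t := by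
      rw [le_inv_mul_iff₀ hq0]; linarith [hb t, mul_nonneg hp0.le (ha t)]
    linarith
  obtain ⟨C, hC, hdecay⟩ := exists_le_mul_pow_of_le_mul (by linarith) (by positivity) hstep hac
  exact ⟨C, hC, α, ⟨by linarith, by linarith [mul_pos hβ0 hκ]⟩, hdecay⟩

def ContractsDisagreement {ι : Type*} [Fintype ι] (E : Type*) [NormedAddCommGroup E]
    [Module ℝ E] (W : Matrix ι ι ℝ) (σ : ℝ) : Prop :=
  ∀ U : ι → E, ∑ i, U i = 0 → stackNorm (mix W U) ≤ σ * stackNorm U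

section GradientTracking

variable {ι E : Type*} [Fintype ι] [NormedAddCommGroup E] [InnerProductSpace ℝ E]

noncomputable def consensusError (U : ι → E) : ℝ := stackNorm (disagreement U)

/-- Measured on the constant stack, i.e. `√(card ι) * ‖average U - xstar‖`, so that it lives in
the same norm as the consensus errors. -/
noncomputable def optimalityError (U : ι → E) (xstar : E) : ℝ :=
  stackNorm fun _ : ι => average U - xstar

lemma stackNorm_sub_const_le (U : ι → E) (v : E) :
    stackNorm (U - fun _ => v) ≤ consensusError U + optimalityError U v := by
  have hsplit : U - (fun _ => v) = disagreement U + fun _ => average U - v := by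
    ext i; simp [disagreement_eq]
  rw [hsplit]
  exact stackNorm_add_le _ _

structure IsGradientTracking (W : Matrix ι ι ℝ) (A : ι → E →L[ℝ] E) (b : ι → E) (β : ℝ)
    (x s : ℕ → ι → E) : Prop where
  sum_s_zero : ∑ i, s 0 i = ∑ i, (A i (x 0 i) + b i)
  x_succ (t : ℕ) : x (t + 1) = mix W (x t) - β • s t
  s_succ (t : ℕ) : s (t + 1) = mix W (s t) + fun i => A i (x (t + 1) i - x t i)

namespace IsGradientTracking

variable {W : Matrix ι ι ℝ} {A : ι → E →L[ℝ] E} {b : ι → E} {β : ℝ} {x s : ℕ → ι → E}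
  {xstar : E}

lemma sum_s (h : IsGradientTracking W A b β x s) (hcol : ∀ j, ∑ i, W i j = 1) (t : ℕ) :
    ∑ i, s t i = ∑ i, (A i (x t i) + b i) := by
  induction t with
  | zero => exact h.sum_s_zero
  | succ t ih =>
    simp only [h.s_succ t, Pi.add_apply, Finset.sum_add_distrib, sum_mix hcol, map_sub,
      Finset.sum_sub_distrib] at ih ⊢
    rw [ih]
    abel

lemma average_s (h : IsGradientTracking W A b β x s) (hcol : ∀ j, ∑ i, W i j = 1)
    (hxstar : ∑ i, (A i xstar + b i) = 0) (t : ℕ) :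
    average (s t) = average fun i => A i (x t i - xstar) := by
  simp only [average_apply, h.sum_s hcol t, map_sub]
  rw [← sub_zero (∑ i, (A i (x t i) + b i)), ← hxstar, ← Finset.sum_sub_distrib]
  simp only [add_sub_add_right_eq_sub]

lemma average_x_succ (h : IsGradientTracking W A b β x s) (hcol : ∀ j, ∑ i, W i j = 1)
    (t : ℕ) : average (x (t + 1)) = average (x t) - β • average (s t) := by
  rw [h.x_succ, map_sub, map_smul, average_mix hcol]

lemma disagreement_x_succ (h : IsGradientTracking W A b β x s) (hrow : ∀ i, ∑ j, W i j = 1)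
    (hcol : ∀ j, ∑ i, W i j = 1) (t : ℕ) :
    disagreement (x (t + 1)) = mix W (disagreement (x t)) - β • disagreement (s t) := by
  rw [h.x_succ, map_sub, map_smul, disagreement_mix hrow hcol]

variable [Nonempty ι] {σ L ν : ℝ}

lemma consensus_step (h : IsGradientTracking W A b β x s) (hrow : ∀ i, ∑ j, W i j = 1)
    (hcol : ∀ j, ∑ i, W i j = 1) (hW : ContractsDisagreement E W σ) (hβ : 0 ≤ β) (t : ℕ) :
    consensusError (x (t + 1)) ≤ σ * consensusError (x t) + β * consensusError (s t) := by
  rw [consensusError, h.disagreement_x_succ hrow hcol t]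
  refine (stackNorm_sub_le _ _).trans ?_
  rw [stackNorm_smul, abs_of_nonneg hβ]
  exact add_le_add (hW _ (sum_disagreement _)) le_rfl

lemma stackNorm_s_le (h : IsGradientTracking W A b β x s) (hcol : ∀ j, ∑ i, W i j = 1)
    (hxstar : ∑ i, (A i xstar + b i) = 0) (hL0 : 0 ≤ L) (hL : ∀ i, ‖A i‖ ≤ L) (t : ℕ) :
    stackNorm (s t) ≤
      consensusError (s t) + L * (consensusError (x t) + optimalityError (x t) xstar) := by
  have havg : stackNorm (fun _ : ι => average (s t)) ≤ L * stackNorm (x t - fun _ => xstar) := by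
    rw [h.average_s hcol hxstar t]
    exact (stackNorm_const_average_le _).trans
      (stackNorm_le_of_norm_le hL0 fun i => (A i).le_of_opNorm_le (hL i) _)
  calc stackNorm (s t) = stackNorm (disagreement (s t) + fun _ => average (s t)) := by
        rw [disagreement_add_const]
    _ ≤ consensusError (s t) + stackNorm (fun _ : ι => average (s t)) := stackNorm_add_le _ _
    _ ≤ consensusError (s t) + L * (consensusError (x t) + optimalityError (x t) xstar) := by
        gcongr
        exact havg.trans (mul_le_mul_of_nonneg_left (stackNorm_sub_const_le _ _) hL0)

lemma stackNorm_x_succ_sub_le (h : IsGradientTracking W A b β x s)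
    (hrow : ∀ i, ∑ j, W i j = 1) (hW : ContractsDisagreement E W σ) (hβ : 0 ≤ β) (t : ℕ) :
    stackNorm (x (t + 1) - x t) ≤ (1 + σ) * consensusError (x t) + β * stackNorm (s t) := by
  rw [h.x_succ, sub_right_comm, mix_sub_self hrow]
  refine (stackNorm_sub_le _ _).trans ?_
  rw [stackNorm_smul, abs_of_nonneg hβ]
  have hmix := hW _ (sum_disagreement (x t))
  have hsub := stackNorm_sub_le (mix W (disagreement (x t))) (disagreement (x t))
  rw [consensusError]
  linarith

lemma tracking_step (h : IsGradientTracking W A b β x s) (hrow : ∀ i, ∑ j, W i j = 1)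
    (hcol : ∀ j, ∑ i, W i j = 1) (hW : ContractsDisagreement E W σ)
    (hxstar : ∑ i, (A i xstar + b i) = 0) (hL0 : 0 ≤ L) (hL : ∀ i, ‖A i‖ ≤ L) (hβ : 0 ≤ β)
    (t : ℕ) :
    consensusError (s (t + 1)) ≤ σ * consensusError (s t) + L * ((1 + σ) * consensusError (x t)
      + β * (consensusError (s t) + L * (consensusError (x t) + optimalityError (x t) xstar))) := by
  have hD : consensusError (fun i => A i (x (t + 1) i - x t i)) ≤
      L * stackNorm (x (t + 1) - x t) :=
    (stackNorm_disagreement_le _).trans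
      (stackNorm_le_of_norm_le hL0 fun i => (A i).le_of_opNorm_le (hL i) _)
  have hΔ := (h.stackNorm_x_succ_sub_le hrow hW hβ t).trans
    (add_le_add le_rfl (mul_le_mul_of_nonneg_left (h.stackNorm_s_le hcol hxstar hL0 hL t) hβ))
  rw [consensusError, h.s_succ t, map_add, disagreement_mix hrow hcol]
  refine (stackNorm_add_le _ _).trans (add_le_add (hW _ (sum_disagreement _)) ?_)
  exact hD.trans (mul_le_mul_of_nonneg_left hΔ hL0)

lemma optimality_step (h : IsGradientTracking W A b β x s) (hcol : ∀ j, ∑ i, W i j = 1)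
    (hxstar : ∑ i, (A i xstar + b i) = 0) (hA : ∀ v, ν * ‖v‖ ^ 2 ≤ ⟪v, ∑ i, A i v⟫)
    (hL0 : 0 ≤ L) (hL : ∀ i, ‖A i‖ ≤ L) (hβ : 0 ≤ β)
    (hβL : β * L ^ 2 ≤ ν / Fintype.card ι) (hβν : β * (ν / Fintype.card ι) ≤ 2) (t : ℕ) :
    optimalityError (x (t + 1)) xstar ≤ (1 - β * (ν / Fintype.card ι) / 2) *
      optimalityError (x t) xstar + β * L * consensusError (x t) := by
  set v := average (x t) - xstar with hv
  set g := average fun i => A i v with hg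
  set r := average fun i => A i (disagreement (x t) i)
  have hs : average (s t) = g + r := by
    rw [h.average_s hcol hxstar t, ← map_add]
    congr 1
    ext i
    rw [Pi.add_apply, ← map_add, hv, disagreement_eq, Pi.sub_apply]
    abel_nf
  have hdesc : ‖v - β • g‖ ≤ (1 - β * (ν / Fintype.card ι) / 2) * ‖v‖ := by
    refine norm_sub_smul_le_of_le_inner hβ ?_
      (norm_average_le fun i => (A i).le_of_opNorm_le (hL i) v) hβL hβν
    rw [hg, average_apply, inner_smul_right]
    calc ν / Fintype.card ι * ‖v‖ ^ 2 = (Fintype.card ι : ℝ)⁻¹ * (ν * ‖v‖ ^ 2) := by ring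
      _ ≤ _ := by gcongr; exact hA v
  have hr : stackNorm (fun _ : ι => r) ≤ L * consensusError (x t) :=
    (stackNorm_const_average_le _).trans
      (stackNorm_le_of_norm_le hL0 fun i => (A i).le_of_opNorm_le (hL i) _)
  have hx : average (x (t + 1)) - xstar = (v - β • g) - β • r := by
    rw [h.average_x_succ hcol, hs, smul_add, hv]
    abel
  rw [optimalityError, optimalityError, hx, ← hv]
  refine (stackNorm_sub_le (fun _ => v - β • g) (fun _ => β • r)).trans ?_
  rw [show (fun _ : ι => β • r) = β • fun _ => r from rfl, stackNorm_smul, abs_of_nonneg hβ,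
    stackNorm_const (v - β • g), stackNorm_const v, mul_assoc β]
  refine add_le_add ?_ (mul_le_mul_of_nonneg_left hr hβ)
  calc √(Fintype.card ι) * ‖v - β • g‖
      ≤ √(Fintype.card ι) * ((1 - β * (ν / Fintype.card ι) / 2) * ‖v‖) := by gcongr
    _ = _ := by ring

end IsGradientTracking

theorem gradientTracking_linear_convergence [Nonempty ι] {W : Matrix ι ι ℝ} {σ : ℝ}
    (hσ0 : 0 ≤ σ) (hσ1 : σ < 1) (hrow : ∀ i, ∑ j, W i j = 1) (hcol : ∀ j, ∑ i, W i j = 1)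
    (hW : ContractsDisagreement E W σ) (A : ι → E →L[ℝ] E) {ν : ℝ} (hν : 0 < ν)
    (hA : ∀ v, ν * ‖v‖ ^ 2 ≤ ⟪v, ∑ i, A i v⟫) (b : ι → E) (xstar : E)
    (hxstar : ∑ i, (A i xstar + b i) = 0) :
    ∃ βstar > 0, ∀ β, 0 < β → β < βstar → ∀ x s : ℕ → ι → E,
      IsGradientTracking W A b β x s →
        ∃ C > 0, ∃ α ∈ Set.Ioo (0 : ℝ) 1, ∀ i t, ‖x t i - xstar‖ ≤ C * α ^ t := by
  have hN : (0 : ℝ) < Fintype.card ι := Nat.cast_pos.2 Fintype.card_pos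
  set L := 1 + ∑ i, ‖A i‖
  have hL1 : 1 ≤ L := le_add_of_nonneg_right (by positivity)
  have hL : ∀ i, ‖A i‖ ≤ L := fun i =>
    (Finset.single_le_sum (fun j _ => norm_nonneg (A j)) (Finset.mem_univ i)).trans
      (le_add_of_nonneg_left zero_le_one)
  -- `K = L (L + 2)` dominates every coefficient in `tracking_step` and `optimality_step`; the
  -- last two bounds on `β` are the step-size conditions of the descent step in `optimality_step`.
  obtain ⟨β₀, hβ₀, hdecay⟩ := exists_stepsize_geometric_decay hσ0 hσ1
    (K := L * (L + 2)) (κ := ν / Fintype.card ι / 2) (by positivity) (by positivity)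
  refine ⟨min β₀ (min (ν / Fintype.card ι / L ^ 2) (2 / (ν / Fintype.card ι))), by positivity, ?_⟩
  intro β hβ0 hβ x s h
  simp only [lt_min_iff, lt_div_iff₀ (by positivity : (0 : ℝ) < L ^ 2),
    lt_div_iff₀ (by positivity : 0 < ν / Fintype.card ι)] at hβ
  obtain ⟨hββ₀, hβL, hβν⟩ := hβ
  obtain ⟨C, hC, α, hα, hac⟩ := hdecay β hβ0 hββ₀ (fun t => consensusError (x t))
    (fun t => consensusError (s t)) (fun t => optimalityError (x t) xstar)
    (fun _ => stackNorm_nonneg _) (fun _ => stackNorm_nonneg _) (fun _ => stackNorm_nonneg _)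
    (h.consensus_step hrow hcol hW hβ0.le)
    (fun t => by
      have hx : 0 ≤ consensusError (x t) := stackNorm_nonneg _
      have hs : 0 ≤ consensusError (s t) := stackNorm_nonneg _
      have hc : 0 ≤ optimalityError (x t) xstar := stackNorm_nonneg _
      have := h.tracking_step hrow hcol hW hxstar (by linarith) hL hβ0.le t
      nlinarith [mul_nonneg (by nlinarith : 0 ≤ L * (L + 1 - σ)) hx,
        mul_nonneg (by positivity : 0 ≤ β * (L * (L + 1))) hs,
        mul_nonneg (by positivity : 0 ≤ β * (2 * L)) (add_nonneg hx hc)])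
    (fun t => by
      have := h.optimality_step hcol hxstar hA (by linarith) hL hβ0.le hβL.le hβν.le t
      have hx : 0 ≤ consensusError (x t) := stackNorm_nonneg _
      nlinarith [mul_nonneg (by positivity : 0 ≤ β * (L * (L + 1))) hx])
  exact ⟨C, hC, α, hα, fun i t =>
    (norm_le_stackNorm (x t - fun _ => xstar) i).trans ((stackNorm_sub_const_le _ _).trans (hac t))⟩

end GradientTracking

namespace Matrix.IsHermitian

variable {ι : Type*} [Fintype ι] [DecidableEq ι] {W : Matrix ι ι ℝ}

lemma inner_eigenvectorBasis_mulVec (hW : W.IsHermitian) (j : ι) (u : ι → ℝ) :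
    ⟪hW.eigenvectorBasis j, (WithLp.toLp 2 (W *ᵥ u) : EuclideanSpace ℝ ι)⟫ =
      hW.eigenvalues j * ⟪hW.eigenvectorBasis j, (WithLp.toLp 2 u : EuclideanSpace ℝ ι)⟫ := by
  have hsymm := isSymmetric_toEuclideanLin_iff.2 hW
  have heig :
      toEuclideanLin W (hW.eigenvectorBasis j) = hW.eigenvalues j • hW.eigenvectorBasis j := by
    rw [toLpLin_apply, hW.mulVec_eigenvectorBasis, WithLp.toLp_smul, WithLp.toLp_ofLp]
  rw [← real_inner_smul_left, ← heig, hsymm]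
  rfl

lemma norm_mulVec_le (hW : W.IsHermitian) {σ : ℝ} (hσ : 0 ≤ σ) (u : ι → ℝ)
    (hu : ∀ j, σ < |hW.eigenvalues j| →
      ⟪hW.eigenvectorBasis j, (WithLp.toLp 2 u : EuclideanSpace ℝ ι)⟫ = 0) :
    ‖(WithLp.toLp 2 (W *ᵥ u) : EuclideanSpace ℝ ι)‖ ≤
      σ * ‖(WithLp.toLp 2 u : EuclideanSpace ℝ ι)‖ := by
  refine le_of_sq_le_sq ?_ (by positivity)
  rw [mul_pow, ← hW.eigenvectorBasis.sum_sq_inner_right, ← hW.eigenvectorBasis.sum_sq_inner_right,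
    Finset.mul_sum]
  refine Finset.sum_le_sum fun j _ => ?_
  rw [inner_eigenvectorBasis_mulVec, mul_pow]
  by_cases hj : σ < |hW.eigenvalues j|
  · simp [hu j hj]
  · refine mul_le_mul_of_nonneg_right ?_ (sq_nonneg _)
    rw [← sq_abs]
    exact pow_le_pow_left₀ (abs_nonneg _) (not_lt.1 hj) 2

end Matrix.IsHermitian

section Consensus

variable {ι : Type*} [Fintype ι] [DecidableEq ι] {W : Matrix ι ι ℝ}

lemma eigenspace_one_eq_span [Nonempty ι] (hW1 : W *ᵥ (fun _ => 1) = fun _ => 1)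
    (hsimple : Module.finrank ℝ (Module.End.eigenspace (toLin' W) 1) = 1) :
    Module.End.eigenspace (toLin' W) 1 = ℝ ∙ fun _ => (1 : ℝ) := by
  have hone : (fun _ => (1 : ℝ)) ≠ 0 := fun h => one_ne_zero (congrFun h (Classical.arbitrary ι))
  refine (Submodule.eq_of_le_of_finrank_eq ?_ ?_).symm
  · rw [Submodule.span_singleton_le_iff_mem, Module.End.mem_eigenspace_iff, toLin'_apply, hW1,
      one_smul]
  · rw [hsimple, finrank_span_singleton hone]

theorem exists_contractsDisagreement [Nonempty ι] (hWsym : W.IsSymm)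
    (hW1 : W *ᵥ (fun _ => 1) = fun _ => 1)
    (hsimple : Module.finrank ℝ (Module.End.eigenspace (toLin' W) 1) = 1)
    (hspec : ∀ μ : ℝ, Module.End.HasEigenvalue (toLin' W) μ → μ = 1 ∨ (-1 < μ ∧ μ < 1)) :
    ∃ σ, 0 ≤ σ ∧ σ < 1 ∧ ContractsDisagreement ℝ W σ := by
  have hW : W.IsHermitian := isHermitian_iff_isSymm.2 hWsym
  have hlt : ∀ j, hW.eigenvalues j ≠ 1 → |hW.eigenvalues j| < 1 := fun j hj => by
    refine abs_lt.2 ((hspec _ ?_).resolve_left hj)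
    rw [Module.End.hasEigenvalue_iff_mem_spectrum, spectrum_toLin']
    exact hW.eigenvalues_mem_spectrum_real j
  obtain ⟨σ, hσ0, hσ1, hσ⟩ :
      ∃ σ : ℝ, 0 ≤ σ ∧ σ < 1 ∧ ∀ j, hW.eigenvalues j ≠ 1 → |hW.eigenvalues j| ≤ σ := by
    obtain ⟨j₀, hj₀⟩ :=
      Finite.exists_max fun j => if hW.eigenvalues j = 1 then 0 else |hW.eigenvalues j|
    refine ⟨_, ?_, ?_, fun j hj => by simpa [hj] using hj₀ j⟩ <;> split_ifs with h
    exacts [le_rfl, abs_nonneg _, zero_lt_one, hlt _ h]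
  -- on real stacks, `mix W u` is `W *ᵥ u` and `stackNorm` is the Euclidean norm, definitionally
  refine ⟨σ, hσ0, hσ1, fun u hu => hW.norm_mulVec_le hσ0 u fun j hj => ?_⟩
  have hj1 : hW.eigenvalues j = 1 := by_contra fun hne => (hσ j hne).not_gt hj
  have hmem : (hW.eigenvectorBasis j).ofLp ∈ Module.End.eigenspace (toLin' W) 1 := by
    rw [Module.End.mem_eigenspace_iff, toLin'_apply, hW.mulVec_eigenvectorBasis, hj1]
  rw [eigenspace_one_eq_span hW1 hsimple, Submodule.mem_span_singleton] at hmem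
  obtain ⟨c, hc⟩ := hmem
  rw [EuclideanSpace.inner_eq_star_dotProduct, ← hc]
  simp [dotProduct, ← Finset.sum_mul, hu]

end Consensus

lemma ContractsDisagreement.euclideanSpace {ι κ : Type*} [Fintype ι] [Fintype κ]
    {W : Matrix ι ι ℝ} {σ : ℝ} (h : ContractsDisagreement ℝ W σ) (hσ : 0 ≤ σ) :
    ContractsDisagreement (EuclideanSpace ℝ κ) W σ := by
  have hsq : ∀ V : ι → EuclideanSpace ℝ κ,
      stackNorm V ^ 2 = ∑ k, stackNorm (fun i => V i k) ^ 2 := fun V => by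
    simp only [stackNorm_sq, EuclideanSpace.norm_sq_eq, Real.norm_eq_abs, sq_abs]
    exact Finset.sum_comm
  intro U hU
  refine le_of_sq_le_sq ?_ (mul_nonneg hσ (stackNorm_nonneg U))
  rw [hsq, mul_pow, hsq, Finset.mul_sum]
  refine Finset.sum_le_sum fun k _ => ?_
  have hk : ∑ i, U i k = 0 := by simpa using congrArg (fun v : EuclideanSpace ℝ κ => v k) hU
  have hmix : (fun i => mix W U i k) = mix W fun i => U i k := by ext i; simp
  rw [hmix, ← mul_pow]
  exact pow_le_pow_left₀ (stackNorm_nonneg _) (h _ hk) 2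

lemma Matrix.isUnit_det_of_le_dotProduct_mulVec {κ : Type*} [Fintype κ] [DecidableEq κ]
    {M : Matrix κ κ ℝ} {ν : ℝ} (hν : 0 < ν) (h : ∀ v, ν * ∑ k, v k ^ 2 ≤ v ⬝ᵥ M *ᵥ v) :
    IsUnit M.det := by
  rw [← isUnit_iff_isUnit_det, ← mulVec_injective_iff_isUnit]
  intro v w hvw
  have hle := h (v - w)
  rw [mulVec_sub, hvw, sub_self, dotProduct_zero] at hle
  have hsum : ∑ k, (v - w) k ^ 2 = 0 :=
    le_antisymm (by nlinarith) (Finset.sum_nonneg fun k _ => sq_nonneg _)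
  ext k
  simpa [sub_eq_zero] using (Finset.sum_eq_zero_iff_of_nonneg fun k _ => sq_nonneg _).1 hsum k
    (Finset.mem_univ k)

lemma isGradientTracking_toLp {ι κ : Type*} [Fintype ι] [Fintype κ] [DecidableEq κ]
    {W : Matrix ι ι ℝ} {G : ι → Matrix κ κ ℝ} {H : ι → κ → ℝ} {β : ℝ} {x s : ℕ → ι → κ → ℝ}
    (hx0 : ∀ i, x 0 i = 0) (hs0 : ∀ i, s 0 i = H i)
    (hx : ∀ t i, x (t + 1) i = (∑ j, W i j • x t j) - β • s t i)
    (hs : ∀ t i, s (t + 1) i = (∑ j, W i j • s t j) + G i *ᵥ (x (t + 1) i - x t i)) :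
    IsGradientTracking W (fun i => toEuclideanCLM (𝕜 := ℝ) (G i)) (fun i => WithLp.toLp 2 (H i)) β
      (fun t i => WithLp.toLp 2 (x t i)) (fun t i => WithLp.toLp 2 (s t i)) where
  sum_s_zero := by simp [hx0, hs0]
  x_succ t := by ext i : 1; simp [hx, WithLp.toLp_sum]
  s_succ t := by ext i : 1; simp [hs, WithLp.toLp_sum, mulVec_sub]

theorem stmt8 (n m : ℕ) (hn : 0 < n)
    (W : Matrix (Fin n) (Fin n) ℝ) (hWsym : W.IsSymm)
    (hW1 : W.mulVec (fun _ => 1) = fun _ => 1)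
    (hsimple : Module.finrank ℝ (Module.End.eigenspace (Matrix.toLin' W) 1) = 1)
    (hspec : ∀ μ : ℝ, Module.End.HasEigenvalue (Matrix.toLin' W) μ →
      μ = 1 ∨ (-1 < μ ∧ μ < 1))
    (G : Fin n → Matrix (Fin m) (Fin m) ℝ)
    (ν : ℝ) (hν : 0 < ν)
    (hGpd : ∀ x : Fin m → ℝ, ν * ∑ k, (x k) ^ 2 ≤ x ⬝ᵥ (∑ i, G i).mulVec x)
    (H : Fin n → Fin m → ℝ) :
    ∃ βstar : ℝ, 0 < βstar ∧ ∀ β : ℝ, 0 < β → β < βstar →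
      ∀ x s : ℕ → Fin n → Fin m → ℝ,
        (∀ i, x 0 i = 0) →
        (∀ i, s 0 i = H i) →
        (∀ t i, x (t + 1) i = (∑ j, W i j • x t j) - β • s t i) →
        (∀ t i, s (t + 1) i = (∑ j, W i j • s t j) + (G i).mulVec (x (t + 1) i - x t i)) →
        ∃ C : ℝ, 0 < C ∧ ∃ α : ℝ, α ∈ Set.Ioo (0 : ℝ) 1 ∧
          ∀ i t, Real.sqrt
              (∑ k, (x t i k - (-(∑ i', G i')⁻¹.mulVec (∑ i', H i')) k) ^ 2)
            ≤ C * α ^ t := by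
  have : Nonempty (Fin n) := ⟨⟨0, hn⟩⟩
  obtain ⟨σ, hσ0, hσ1, hWσ⟩ := exists_contractsDisagreement hWsym hW1 hsimple hspec
  have hrow : ∀ i, ∑ j, W i j = 1 := fun i => by simpa [mulVec, dotProduct] using congrFun hW1 i
  have hcol : ∀ j, ∑ i, W i j = 1 := fun j => by simpa [hWsym.apply] using hrow j
  have hdet := isUnit_det_of_le_dotProduct_mulVec hν hGpd
  have hA : ∀ v, ν * ‖v‖ ^ 2 ≤ ⟪v, ∑ i, toEuclideanCLM (𝕜 := ℝ) (G i) v⟫ := fun v => by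
    rw [← _root_.sum_apply, ← map_sum, inner_toEuclideanCLM, EuclideanSpace.norm_sq_eq]
    simpa [Real.norm_eq_abs, sq_abs] using hGpd v.ofLp
  obtain ⟨βstar, hβstar, hconv⟩ := gradientTracking_linear_convergence hσ0 hσ1 hrow hcol
    (hWσ.euclideanSpace hσ0) (fun i => toEuclideanCLM (𝕜 := ℝ) (G i)) hν hA
    (fun i => WithLp.toLp 2 (H i))
    (WithLp.toLp 2 (-(∑ i', G i')⁻¹.mulVec (∑ i', H i')))
    (by rw [Finset.sum_add_distrib, ← _root_.sum_apply, ← map_sum, toEuclideanCLM_toLp,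
      ← WithLp.toLp_sum, ← WithLp.toLp_add, mulVec_neg, mulVec_mulVec, mul_nonsing_inv _ hdet,
      one_mulVec, neg_add_cancel, WithLp.toLp_zero])
  refine ⟨βstar, hβstar, fun β hβ0 hβ x s hx0 hs0 hx hs => ?_⟩
  obtain ⟨C, hC, α, hα, hbound⟩ := hconv β hβ0 hβ _ _ (isGradientTracking_toLp hx0 hs0 hx hs)
  refine ⟨C, hC, α, hα, fun i t => ?_⟩
  simpa [EuclideanSpace.norm_eq, Real.norm_eq_abs, sq_abs] using hbound i t
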